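/- Let K, L be convex bodies in ℝⁿ with L containing the origin in its interior, and suppose W₀, W₁, …, W_n are the relative quermassintegrals of K with respect to L, i.e. V(K + tL) = Σ_{i=0}^{n} C(n,i) W_i tⁱ for all t ≥ 0. For 0 ≤ i ≤ n−2 define the i-th relative Bonnesen function B_i(r) = 2W_{i+1} r − W_i − W_{i+2} r². For t ≥ 0 set K_t = K + tL, and let W_i(K_t,L) denote the relative quermassintegrals of K_t with respect to L (which exist and are uniquely determined, since V(K_t + sL) = V(K + (t+s)L) is a polynomial in s), with corresponding Bonnesen functions B_{i;K_t}(r) = 2W_{i+1}(K_t,L) r − W_i(K_t,L) − W_{i+2}(K_t,L) r². Then for all real r, all t ≥ 0 and all 0 ≤ i ≤ n−2: B_{i;K_t}(r + t) = Σ_{k=0}^{n−i−2} C(n−i−2, k) B_{i+k}(r) t^k. -/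

import Mathlib

/-!
Since `L` is convex, `(K + tL) + sL = K + (t + s)L`, so the Steiner polynomial of `K_t` is the
Steiner polynomial of `K` shifted by `t`. Comparing coefficients of `s ↦ p(s + t)` gives
`W_j(K_t, L) = ∑_k C(n - j, k) W_{j+k} t^k`. By Pascal's rule the three quermassintegrals
`W_i(K_t, L)`, `W_{i+1}(K_t, L)`, `W_{i+2}(K_t, L)` are combinations of the three binomial sums
of length `n - i - 1` starting at `W_i`, `W_{i+1}`, `W_{i+2}`, and so is the right-hand side;
the identity is then a polynomial identity in these sums.
-/

open scoped Pointwise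
open MeasureTheory Polynomial Finset

def binomialSum (m : ℕ) (a : ℕ → ℝ) (j : ℕ) (t : ℝ) : ℝ :=
  ∑ k ∈ range (m + 1), (m.choose k : ℝ) * a (j + k) * t ^ k

def bonnesen (W : ℕ → ℝ) (i : ℕ) (r : ℝ) : ℝ :=
  2 * W (i + 1) * r - W i - W (i + 2) * r ^ 2

noncomputable def binomialPoly (n : ℕ) (a : ℕ → ℝ) : ℝ[X] :=
  ∑ l ∈ range (n + 1), C ((n.choose l : ℝ) * a l) * X ^ l

section BinomialSum

variable (a : ℕ → ℝ) (m j : ℕ) (t : ℝ)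

theorem binomialSum_succ :
    binomialSum (m + 1) a j t = binomialSum m a j t + t * binomialSum m a (j + 1) t := by
  have hext : binomialSum m a j t = ∑ k ∈ range (m + 2), (m.choose k : ℝ) * a (j + k) * t ^ k := by
    simp [binomialSum, sum_range_succ _ (m + 1)]
  rw [hext, binomialSum, binomialSum, mul_sum, sum_range_succ' _ (m + 1),
    sum_range_succ' _ (m + 1), add_right_comm, ← sum_add_distrib]
  simp only [Nat.choose_succ_succ', Nat.choose_zero_right]
  congr 1
  refine sum_congr rfl fun k _ => ?_
  rw [show j + 1 + k = j + (k + 1) by omega]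
  push_cast
  ring

theorem sum_choose_mul_bonnesen (r : ℝ) :
    ∑ k ∈ range (m + 1), (m.choose k : ℝ) * bonnesen a (j + k) r * t ^ k
      = 2 * r * binomialSum m a (j + 1) t - binomialSum m a j t
        - r ^ 2 * binomialSum m a (j + 2) t := by
  simp only [binomialSum, bonnesen, mul_sum, ← sum_sub_distrib]
  refine sum_congr rfl fun k _ => ?_
  rw [add_right_comm j 1 k, add_right_comm j 2 k]
  ring

end BinomialSum

theorem bonnesen_add_eq_sum_of_eq_binomialSum {a b : ℕ → ℝ} {m j : ℕ} {t : ℝ}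
    (h₀ : b j = binomialSum (m + 2) a j t) (h₁ : b (j + 1) = binomialSum (m + 1) a (j + 1) t)
    (h₂ : b (j + 2) = binomialSum m a (j + 2) t) (r : ℝ) :
    bonnesen b j (r + t) = ∑ k ∈ range (m + 1), (m.choose k : ℝ) * bonnesen a (j + k) r * t ^ k := by
  rw [sum_choose_mul_bonnesen, bonnesen, h₀, h₁, h₂, binomialSum_succ a (m + 1) j,
    binomialSum_succ a m j, binomialSum_succ a m (j + 1)]
  ring

section BinomialPoly

variable (n : ℕ) (a : ℕ → ℝ)

theorem eval_binomialPoly (s : ℝ) :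
    (binomialPoly n a).eval s = ∑ l ∈ range (n + 1), (n.choose l : ℝ) * a l * s ^ l := by
  simp [binomialPoly, eval_finsetSum]

theorem coeff_binomialPoly {j : ℕ} (hj : j ≤ n) :
    (binomialPoly n a).coeff j = n.choose j * a j := by
  simp only [binomialPoly, finsetSum_coeff, coeff_C_mul, coeff_X_pow, mul_ite, mul_one, mul_zero]
  simp [Nat.lt_succ_iff.mpr hj]

theorem coeff_binomialPoly_comp_X_add_C (t : ℝ) {j m : ℕ} (hn : j + m = n) :
    ((binomialPoly n a).comp (X + C t)).coeff j = n.choose j * binomialSum m a j t := by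
  subst hn
  simp only [binomialPoly, Polynomial.sum_comp, mul_comp, C_comp, X_pow_comp, finsetSum_coeff,
    coeff_C_mul, coeff_X_add_C_pow]
  have hlow : ∀ l ∈ range j, ((j + m).choose l * a l : ℝ) * (t ^ (l - j) * l.choose j) = 0 := by
    intro l hl
    simp [Nat.choose_eq_zero_of_lt (mem_range.mp hl)]
  rw [add_assoc, sum_range_add, sum_eq_zero hlow, zero_add, binomialSum, mul_sum]
  refine sum_congr rfl fun k _ => ?_
  have hchoose : ((j + m).choose (j + k) : ℝ) * (j + k).choose j = (j + m).choose j * m.choose k := by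
    rw [← Nat.cast_mul, Nat.choose_mul (Nat.le_add_right j k), Nat.add_sub_cancel_left,
      Nat.add_sub_cancel_left, Nat.cast_mul]
  rw [Nat.add_sub_cancel_left]
  linear_combination (a (j + k) * t ^ k) * hchoose

end BinomialPoly

theorem eq_binomialSum_of_eval_shift_eq {n : ℕ} {a b : ℕ → ℝ} {t : ℝ}
    (h : ∀ s : ℝ, 0 ≤ s → ∑ l ∈ range (n + 1), (n.choose l : ℝ) * b l * s ^ l
      = ∑ l ∈ range (n + 1), (n.choose l : ℝ) * a l * (t + s) ^ l)
    (j m : ℕ) (hn : j + m = n) : b j = binomialSum m a j t := by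
  have hpoly : binomialPoly n b = (binomialPoly n a).comp (X + C t) := by
    refine eq_of_infinite_eval_eq _ _ ((Set.Ici_infinite 0).mono fun s hs => ?_)
    simp only [Set.mem_ofPred_eq, eval_comp, eval_add, eval_X, eval_C, eval_binomialPoly,
      add_comm s t]
    exact h s hs
  have hj : j ≤ n := hn ▸ Nat.le_add_right j m
  have hcoeff := congrArg (coeff · j) hpoly
  simp only [coeff_binomialPoly n b hj, coeff_binomialPoly_comp_X_add_C n a t hn] at hcoeff
  exact mul_left_cancel₀ (Nat.cast_ne_zero.mpr (Nat.choose_pos hj).ne') hcoeff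

theorem bonnesen_function_of_outer_parallel_body
    (n : ℕ) (K L : Set (EuclideanSpace ℝ (Fin n)))
    (hLconv : Convex ℝ L)
    (W : ℕ → ℝ)
    (hW : ∀ t : ℝ, 0 ≤ t →
      (volume (K + t • L)).toReal
        = ∑ i ∈ Finset.range (n + 1), (n.choose i : ℝ) * W i * t ^ i)
    (t : ℝ) (ht : 0 ≤ t) (Wt : ℕ → ℝ)
    (hWt : ∀ s : ℝ, 0 ≤ s →
      (volume ((K + t • L) + s • L)).toReal
        = ∑ i ∈ Finset.range (n + 1), (n.choose i : ℝ) * Wt i * s ^ i)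
    (i : ℕ) (hi : i + 2 ≤ n) (r : ℝ) :
    2 * Wt (i + 1) * (r + t) - Wt i - Wt (i + 2) * (r + t) ^ 2
      = ∑ k ∈ Finset.range (n - i - 2 + 1),
          ((n - i - 2).choose k : ℝ) *
            (2 * W (i + k + 1) * r - W (i + k) - W (i + k + 2) * r ^ 2) * t ^ k := by
  have hshift : ∀ s : ℝ, 0 ≤ s → ∑ l ∈ range (n + 1), (n.choose l : ℝ) * Wt l * s ^ l
      = ∑ l ∈ range (n + 1), (n.choose l : ℝ) * W l * (t + s) ^ l := fun s hs => by
    rw [← hWt s hs, add_assoc, ← hLconv.add_smul ht hs, hW (t + s) (add_nonneg ht hs)]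
  have hWt_eq := eq_binomialSum_of_eval_shift_eq hshift
  exact bonnesen_add_eq_sum_of_eq_binomialSum (hWt_eq i (n - i - 2 + 2) (by omega))
    (hWt_eq (i + 1) (n - i - 2 + 1) (by omega)) (hWt_eq (i + 2) (n - i - 2) (by omega)) r
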